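/- arXiv:math/0510219 — 3 statements merged into one kernel-verified Lean document; each statement's English description precedes it below -/
import Mathlib

section
/- Let φ ∈ L^∞ ∩ H² be outer and let d ∈ H² be such that conj(φ)·d ∈ H²₋ (i.e. ĉ(conj(φ)d, n) = 0 for all n ≥ 0). Then d = 0 in L². (This expresses that the sums (1/T_e)H² + H²₋ and (1/conj(T_e))H²₋ + H² are direct sums when T_e is outer.) -/
open MeasureTheory Complex Filter ComplexConjugate
open scoped Real Topology

noncomputable section

instance : Fact ((0:ℝ) < 2 * Real.pi) := ⟨Real.two_pi_pos⟩

/-- The unit circle, modeled additively as `ℝ / 2πℤ`; the point `t` corresponds to `e^{it}`. -/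
abbrev 𝕋c : Type := AddCircle (2 * Real.pi)

/-- Normalized Lebesgue (Haar) measure on the circle. -/
abbrev m : Measure 𝕋c := AddCircle.haarAddCircle

/-- Squared `L²` norm. -/
def sqNorm (f : 𝕋c → ℂ) : ℝ := ∫ t, ‖f t‖ ^ 2 ∂m

/-- `‖P₋ g‖²`, expressed via Parseval: the sum of `|ĉ(g,n)|²` over `n < 0`. -/
def negSq (g : 𝕋c → ℂ) : ℝ := ∑' n : ℤ, if n < 0 then ‖fourierCoeff g n‖ ^ 2 else 0

/-- Membership in the Hardy space `H²`. -/
def InH2 (f : 𝕋c → ℂ) : Prop := MemLp f 2 m ∧ ∀ n : ℤ, n < 0 → fourierCoeff f n = 0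

/-- Membership in `H²₋ = L² ⊖ H²`. -/
def InH2neg (f : 𝕋c → ℂ) : Prop := MemLp f 2 m ∧ ∀ n : ℤ, 0 ≤ n → fourierCoeff f n = 0

/-- Value of (the analytic extension of) `f` at a point `w` of the unit disk. -/
def evalD (f : 𝕋c → ℂ) (w : ℂ) : ℂ := ∑' n : ℕ, fourierCoeff f (n : ℤ) * w ^ n

/-- `p = P₋ g`: characterization of the negative Riesz projection via Fourier coefficients. -/
def IsPneg (g p : 𝕋c → ℂ) : Prop :=
  MemLp p 2 m ∧ (∀ n : ℤ, n < 0 → fourierCoeff p n = fourierCoeff g n) ∧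
    ∀ n : ℤ, 0 ≤ n → fourierCoeff p n = 0

/-- Analytic polynomials on the circle. -/
def IsAnalyticPoly (p : 𝕋c → ℂ) : Prop :=
  ∃ (N : ℕ) (c : ℕ → ℂ), p = fun t => ∑ j ∈ Finset.range N, c j * fourier (j : ℤ) t

/-- `φ` is outer: `φ ∈ H²` and `{φ·p : p analytic polynomial}` is `L²`-dense in `H²`. -/
def IsOuter (φ : 𝕋c → ℂ) : Prop :=
  InH2 φ ∧ ∀ g : 𝕋c → ℂ, InH2 g → ∀ ε : ℝ, 0 < ε →
    ∃ p, IsAnalyticPoly p ∧ ∫ t, ‖φ t * p t - g t‖ ^ 2 ∂m < ε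

/-- `f ∈ H²` is admissible: it vanishes at all but finitely many of the points `ζ k`. -/
def Admissible (ζ : ℕ → ℂ) (f : 𝕋c → ℂ) : Prop :=
  InH2 f ∧ {k | evalD f (ζ k) ≠ 0}.Finite

/-- The quadratic form `Q(f) = ‖f‖² − ‖P₋(Wf)‖² + Σ ν_k |f(ζ_k)|²`. -/
def Q (W : 𝕋c → ℂ) (ζ : ℕ → ℂ) (ν : ℕ → ℝ) (f : 𝕋c → ℂ) : ℝ :=
  sqNorm f - negSq (fun t => W t * f t) + ∑' k, ν k * ‖evalD f (ζ k)‖ ^ 2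

/-- `S(α) = sup{|ĉ(f,0)| : f admissible, Q_α(f) ≤ 1}`, the value at `0` of the normalized
reproducing kernel. -/
def S (W : 𝕋c → ℂ) (ζ : ℕ → ℂ) (ν : ℕ → ℝ) : ℝ :=
  sSup { x | ∃ f, Admissible ζ f ∧ Q W ζ ν f ≤ 1 ∧ x = ‖fourierCoeff f 0‖ }

/-- The Blaschke product with zeros `ζ k`. -/
def Bprod (ζ : ℕ → ℂ) (z : ℂ) : ℂ :=
  ∏' k, ((‖ζ k‖ : ℂ) / ζ k) * ((ζ k - z) / (1 - conj (ζ k) * z))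

/-- Membership of the pair `(f₁, f₂)` in the space `V = L²_R` (with `φ` the boundary values
of the Szegő outer function `T_e`). -/
def MemV (R φ f₁ f₂ : 𝕋c → ℂ) : Prop :=
  AEStronglyMeasurable f₁ m ∧ AEStronglyMeasurable f₂ m ∧
  MemLp (fun t => φ t * f₁ t) 2 m ∧
  MemLp (fun t => conj (φ t) * f₂ t) 2 m ∧
  (∀ n : ℤ, 0 ≤ n → fourierCoeff (fun t => conj (φ t) * f₂ t) n = 0) ∧
  MemLp (fun t => R t * f₁ t + f₂ t) 2 m ∧
  (∀ n : ℤ, n < 0 → fourierCoeff (fun t => R t * f₁ t + f₂ t) n = 0)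

/-- The squared `V`-norm `‖(f₁,f₂)‖_V² = ∫ (|Rf₁+f₂|² + |φf₁|²) dm`. -/
def VnormSq (R φ f₁ f₂ : 𝕋c → ℂ) : ℝ :=
  ∫ t, (‖R t * f₁ t + f₂ t‖ ^ 2 + ‖φ t * f₁ t‖ ^ 2) ∂m

/-- Membership of the triple `(f₁, f₂, {f_k})` in `L²(α)`. -/
def MemL2α (R φ : 𝕋c → ℂ) (ν : ℕ → ℝ) (f₁ f₂ : 𝕋c → ℂ) (fk : ℕ → ℂ) : Prop :=
  MemV R φ f₁ f₂ ∧ Summable (fun k => ν k * ‖fk k‖ ^ 2)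

/-- The squared norm on `L²(α)`. -/
def αnormSq (R φ : 𝕋c → ℂ) (ν : ℕ → ℝ) (f₁ f₂ : 𝕋c → ℂ) (fk : ℕ → ℂ) : ℝ :=
  VnormSq R φ f₁ f₂ + ∑' k, ν k * ‖fk k‖ ^ 2

/-- Membership in `čH²(α)`: the triple lies in `L²(α)` and is approximated in the `L²(α)`
norm by embedded admissible functions `ι(f) = (f, −P₋(Rf), {f(ζ_k)})`. -/
def MemCheckH2 (R φ : 𝕋c → ℂ) (ζ : ℕ → ℂ) (ν : ℕ → ℝ)
    (f₁ f₂ : 𝕋c → ℂ) (fk : ℕ → ℂ) : Prop :=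
  MemL2α R φ ν f₁ f₂ fk ∧
  ∀ ε : ℝ, 0 < ε → ∃ f p : 𝕋c → ℂ, Admissible ζ f ∧ IsPneg (fun t => R t * f t) p ∧
    VnormSq R φ (fun t => f₁ t - f t) (fun t => f₂ t + p t) +
      ∑' k, ν k * ‖fk k - evalD f (ζ k)‖ ^ 2 < ε

/-- Membership in `ĤH²(α)`: `g := φf₁ ∈ H²` and `f_k·φ(ζ_k) = g(ζ_k)` for all `k`. -/
def MemHatH2 (R φ : 𝕋c → ℂ) (ζ : ℕ → ℂ) (ν : ℕ → ℝ)
    (f₁ f₂ : 𝕋c → ℂ) (fk : ℕ → ℂ) : Prop :=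
  MemL2α R φ ν f₁ f₂ fk ∧
  (∀ n : ℤ, n < 0 → fourierCoeff (fun t => φ t * f₁ t) n = 0) ∧
  ∀ k, fk k * evalD φ (ζ k) = evalD (fun t => φ t * f₁ t) (ζ k)

/-- The dual coefficient `R^τ`; note that on the additive circle, `conj t` corresponds
to `−t`, so `R^τ(s) = −R(conj s)·conj(φ(conj s))·β(conj s)/φ(conj s)`. -/
def dualR (R φ β : 𝕋c → ℂ) : 𝕋c → ℂ := fun s => -R (-s) * conj (φ (-s)) * β (-s) / φ (-s)

/-- `φ^τ(t) = conj(φ(conj t))`. -/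
def dualφ (φ : 𝕋c → ℂ) : 𝕋c → ℂ := fun s => conj (φ (-s))

/-- `β^τ(t) = conj(β(conj t))`. -/
def dualβ (β : 𝕋c → ℂ) : 𝕋c → ℂ := fun s => conj (β (-s))

/-- The reflected points `conj ζ_k`. -/
def dualζ (ζ : ℕ → ℂ) : ℕ → ℂ := fun k => conj (ζ k)

/-- The dual masses `ν^τ_k = |T_e(ζ_k)/B′(ζ_k)|²/ν_k`. -/
def dualν (φ : 𝕋c → ℂ) (ζ : ℕ → ℂ) (ν : ℕ → ℝ) : ℕ → ℝ :=
  fun k => ‖evalD φ (ζ k) / deriv (Bprod ζ) (ζ k)‖ ^ 2 / ν k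

/-- The defining relations of the map `τ` on triples: on the circle
`f₁(t) + conj(R(t))f₂(t) = conj(φ(t))β(t)·conj(t)·f₁^τ(conj t)` and
`R(t)f₁(t) + f₂(t) = φ(t)·conj(t)·f₂^τ(conj t)` (here `conj t ↔ −t` and the complex
number `t` is `fourier 1 t`), and `f^τ_k = −conj(B′(ζ_k)/T_e(ζ_k))·f_k·ν_k`. -/
def TauRel (R φ β : 𝕋c → ℂ) (ζ : ℕ → ℂ) (ν : ℕ → ℝ)
    (f₁ f₂ : 𝕋c → ℂ) (fk : ℕ → ℂ) (h₁ h₂ : 𝕋c → ℂ) (hk : ℕ → ℂ) : Prop :=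
  (∀ᵐ t ∂m, f₁ t + conj (R t) * f₂ t = conj (φ t) * β t * fourier (-1) t * h₁ (-t) ∧
      R t * f₁ t + f₂ t = φ t * fourier (-1) t * h₂ (-t)) ∧
  ∀ k, hk k = -conj (deriv (Bprod ζ) (ζ k) / evalD φ (ζ k)) * fk k * ν k

/-- Membership in `L²(α) ⊖ čH²(α)`: a triple of `L²(α)` orthogonal to every embedded
admissible function. -/
def PerpCheck (R φ : 𝕋c → ℂ) (ζ : ℕ → ℂ) (ν : ℕ → ℝ)
    (f₁ f₂ : 𝕋c → ℂ) (fk : ℕ → ℂ) : Prop :=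
  MemL2α R φ ν f₁ f₂ fk ∧
  ∀ f p : 𝕋c → ℂ, Admissible ζ f → IsPneg (fun t => R t * f t) p →
    (∫ t, ((R t * f₁ t + f₂ t) * conj (R t * f t + -p t) +
        (φ t * f₁ t) * conj (φ t * f t)) ∂m) +
      ∑' k, (ν k : ℂ) * fk k * conj (evalD f (ζ k)) = 0

/-!
For `j ≥ 0`, the inner product `⟨φ·e_j, d⟩` is the `j`-th Fourier coefficient of `conj(φ)·d`,
which vanishes. So `d` is orthogonal to `φ·p` for every analytic polynomial `p`; as `φ` is outer
these are dense in `H² ∋ d`, hence `d ⊥ d`.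
-/

open scoped InnerProductSpace

section L2

variable {α : Type*} [MeasurableSpace α] {μ : Measure α}

theorem MeasureTheory.MemLp.norm_toLp_sq {E : Type*} [NormedAddCommGroup E] {f : α → E}
    (hf : MemLp f 2 μ) : ‖hf.toLp f‖ ^ 2 = ∫ a, ‖f a‖ ^ 2 ∂μ := by
  rw [Lp.norm_toLp, hf.eLpNorm_eq_integral_rpow_norm two_ne_zero ENNReal.ofNat_ne_top,
    ENNReal.toReal_ofReal (by positivity), ENNReal.toReal_ofNat, ← Real.rpow_natCast,
    ← Real.rpow_mul (integral_nonneg fun _ => by positivity)]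
  norm_num

theorem MeasureTheory.MemLp.inner_toLp_toLp {𝕜 E : Type*} [RCLike 𝕜] [NormedAddCommGroup E]
    [InnerProductSpace 𝕜 E] {f g : α → E} (hf : MemLp f 2 μ) (hg : MemLp g 2 μ) :
    ⟪hf.toLp f, hg.toLp g⟫_𝕜 = ∫ a, ⟪f a, g a⟫_𝕜 ∂μ := by
  rw [L2.inner_def]
  refine integral_congr_ae ?_
  filter_upwards [hf.coeFn_toLp, hg.coeFn_toLp] with a hfa hga
  rw [hfa, hga]

end L2

theorem eq_zero_of_mem_closure_inner_eq_zero {𝕜 E : Type*} [RCLike 𝕜] [NormedAddCommGroup E]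
    [InnerProductSpace 𝕜 E] {x : E} (hx : x ∈ closure {y : E | ⟪x, y⟫_𝕜 = 0}) : x = 0 :=
  inner_self_eq_zero.mp <| closure_minimal subset_rfl
    (isClosed_eq (continuous_const.inner continuous_id) continuous_const) hx

theorem MeasureTheory.MemLp.mul_continuous {X R : Type*} [TopologicalSpace X] [CompactSpace X]
    [MeasurableSpace X] [OpensMeasurableSpace X] [NormedRing R] {μ : Measure X}
    {p : ENNReal} {f g : X → R} (hf : MemLp f p μ) (hg : Continuous g) :
    MemLp (fun t => f t * g t) p μ :=
  (hg.memLp_top_of_hasCompactSupport (HasCompactSupport.of_compactSpace g) μ).mul' hf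

theorem IsAnalyticPoly.continuous {p : 𝕋c → ℂ} (hp : IsAnalyticPoly p) : Continuous p := by
  obtain ⟨N, c, rfl⟩ := hp
  fun_prop

theorem integral_inner_mul_fourier_eq_conj_fourierCoeff {φ d : 𝕋c → ℂ} (j : ℤ) :
    ∫ t, ⟪d t, φ t * fourier j t⟫_ℂ ∂m = conj (fourierCoeff (fun t => conj (φ t) * d t) j) := by
  rw [fourierCoeff, ← integral_conj]
  congr 1 with t
  simp only [RCLike.inner_apply', fourier_neg, smul_eq_mul, map_mul, conj_conj]
  ring

theorem integral_inner_mul_isAnalyticPoly_eq_zero {φ d p : 𝕋c → ℂ} (hφ : MemLp φ 2 m)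
    (hd : MemLp d 2 m) (hneg : ∀ n : ℤ, 0 ≤ n → fourierCoeff (fun t => conj (φ t) * d t) n = 0)
    (hp : IsAnalyticPoly p) : ∫ t, ⟪d t, φ t * p t⟫_ℂ ∂m = 0 := by
  obtain ⟨N, c, rfl⟩ := hp
  have hint (j : ℕ) : Integrable (fun t => c j * ⟪d t, φ t * fourier (j : ℤ) t⟫_ℂ) m := by
    simpa only [RCLike.inner_apply', Pi.mul_apply, Pi.star_apply, RCLike.star_def] using
      ((hd.star.integrable_mul (hφ.mul_continuous (map_continuous (fourier (j : ℤ))))).const_mul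
        (c j))
  have hsum (t : 𝕋c) : ⟪d t, φ t * ∑ j ∈ Finset.range N, c j * fourier (j : ℤ) t⟫_ℂ =
      ∑ j ∈ Finset.range N, c j * ⟪d t, φ t * fourier (j : ℤ) t⟫_ℂ := by
    simp only [RCLike.inner_apply', Finset.mul_sum]
    ring_nf
  simp only [hsum]
  rw [integral_finsetSum _ fun j _ => hint j]
  refine Finset.sum_eq_zero fun j _ => ?_
  rw [integral_const_mul, integral_inner_mul_fourier_eq_conj_fourierCoeff,
    hneg j (Int.natCast_nonneg j), map_zero, mul_zero]

theorem direct_sum_property_general (φ : 𝕋c → ℂ) (hφ : IsOuter φ)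
    (d : 𝕋c → ℂ) (hd : InH2 d)
    (hneg : ∀ n : ℤ, 0 ≤ n → fourierCoeff (fun t => conj (φ t) * d t) n = 0) :
    ∀ᵐ t ∂m, d t = 0 := by
  obtain ⟨⟨hφL2, -⟩, hdense⟩ := hφ
  suffices hD : hd.1.toLp d = 0 from
    (MemLp.toLp_eq_toLp_iff hd.1 MemLp.zero).mp (hD.trans (MemLp.toLp_zero _).symm)
  refine eq_zero_of_mem_closure_inner_eq_zero (𝕜 := ℂ) (Metric.mem_closure_iff.2 fun ε hε => ?_)
  obtain ⟨p, hp, hclose⟩ := hdense d hd (ε ^ 2) (by positivity)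
  have hφp : MemLp (fun t => φ t * p t) 2 m := hφL2.mul_continuous hp.continuous
  refine ⟨hφp.toLp _, ?_, ?_⟩
  · rw [Set.mem_ofPred_eq, MemLp.inner_toLp_toLp]
    exact integral_inner_mul_isAnalyticPoly_eq_zero hφL2 hd.1 hneg hp
  · rw [dist_eq_norm, ← MemLp.toLp_sub, ← sq_lt_sq₀ (norm_nonneg _) hε.le, MemLp.norm_toLp_sq]
    simpa only [Pi.sub_apply, norm_sub_rev] using hclose

/-- if `φ ∈ L^∞ ∩ H²` is outer and `d ∈ H²` with `conj(φ)·d ∈ H²₋`,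
then `d = 0` in `L²`. -/
theorem direct_sum_property (φ : 𝕋c → ℂ) (hφb : MemLp φ ⊤ m) (hφ : IsOuter φ)
    (d : 𝕋c → ℂ) (hd : InH2 d)
    (hneg : ∀ n : ℤ, 0 ≤ n → fourierCoeff (fun t => conj (φ t) * d t) n = 0) :
    ∀ᵐ t ∂m, d t = 0 :=
  direct_sum_property_general φ hφ d hd hneg
end
end

section
/- (Uniqueness of the second component in L²_R.) Suppose (f₁, f₂) ∈ V and (f₁, f₂′) ∈ V with the same first component f₁. Then f₂ = f₂′ a.e. on 𝕋. In other words, in the space L²_R the first component determines the second component uniquely. -/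
open MeasureTheory Complex Filter ComplexConjugate
open scoped Real Topology

noncomputable section

/-! Since both pairs share `f₁`, the difference `g = f₂ - f₂'` equals `(R f₁ + f₂) - (R f₁ + f₂')`
and so lies in `H²`, while `conj φ · g` lies in `H²₋`. The latter says exactly that `g` is
orthogonal in `L²` to `φ p` for every analytic polynomial `p`. As `φ` is outer, these `φ p` are
dense in `H² ∋ g`, so `g` is orthogonal to itself. -/

section FourierCoeff

variable {T : ℝ} [Fact (0 < T)]

theorem fourierCoeff_sub {E : Type*} [NormedAddCommGroup E] [NormedSpace ℂ E]
    {f g : AddCircle T → E} (hf : Integrable f AddCircle.haarAddCircle)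
    (hg : Integrable g AddCircle.haarAddCircle) (n : ℤ) :
    fourierCoeff (fun t => f t - g t) n = fourierCoeff f n - fourierCoeff g n := by
  simp only [fourierCoeff, smul_sub]
  exact integral_sub (hf.fourier_smul _) (hg.fourier_smul _)

theorem integral_conj_mul_fourier (h : AddCircle T → ℂ) (n : ℤ) :
    ∫ t, conj (h t) * fourier n t ∂AddCircle.haarAddCircle = conj (fourierCoeff h n) := by
  rw [fourierCoeff, ← integral_conj]
  simp [mul_comm]

end FourierCoeff

theorem eq_zero_of_mem_closure_of_forall_inner_eq_zero {𝕜 E : Type*} [RCLike 𝕜]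
    [NormedAddCommGroup E] [InnerProductSpace 𝕜 E] {s : Set E} {x : E}
    (hx : x ∈ closure s) (h : ∀ y ∈ s, inner 𝕜 x y = 0) : x = 0 := by
  have hclosed : IsClosed {y : E | inner 𝕜 x y = 0} :=
    isClosed_eq (continuous_const.inner continuous_id) continuous_const
  exact inner_self_eq_zero.mp (closure_minimal h hclosed hx)

theorem MeasureTheory.MemLp.inner_toLp_eq_integral {α : Type*} [MeasurableSpace α] {μ : Measure α}
    {𝕜 : Type*} [RCLike 𝕜] {u v : α → 𝕜} (hu : MemLp u 2 μ) (hv : MemLp v 2 μ) :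
    inner 𝕜 (hu.toLp u) (hv.toLp v) = ∫ t, conj (u t) * v t ∂μ := by
  rw [L2.inner_def]
  refine integral_congr_ae ?_
  filter_upwards [hu.coeFn_toLp, hv.coeFn_toLp] with t hut hvt
  rw [RCLike.inner_apply', hut, hvt]

theorem MeasureTheory.MemLp.norm_toLp_sq_s5 {α : Type*} [MeasurableSpace α] {μ : Measure α}
    {𝕜 : Type*} [RCLike 𝕜] {u : α → 𝕜} (hu : MemLp u 2 μ) :
    ‖hu.toLp u‖ ^ 2 = ∫ t, ‖u t‖ ^ 2 ∂μ := by
  rw [← inner_self_eq_norm_sq (𝕜 := 𝕜), hu.inner_toLp_eq_integral hu]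
  simp_rw [RCLike.conj_mul, ← RCLike.ofReal_pow]
  rw [integral_ofReal, RCLike.ofReal_re]

theorem IsAnalyticPoly.memLp_top {p : 𝕋c → ℂ} (hp : IsAnalyticPoly p) : MemLp p ⊤ m := by
  obtain ⟨N, c, rfl⟩ := hp
  have hcont : Continuous fun t : 𝕋c => ∑ j ∈ Finset.range N, c j * fourier (j : ℤ) t := by
    fun_prop
  exact hcont.memLp_top_of_hasCompactSupport (HasCompactSupport.of_compactSpace _) m

theorem integral_conj_mul_eq_zero_of_isAnalyticPoly {h p : 𝕋c → ℂ} (hh : Integrable h m)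
    (hcoeff : ∀ n : ℤ, 0 ≤ n → fourierCoeff h n = 0) (hp : IsAnalyticPoly p) :
    ∫ t, conj (h t) * p t ∂m = 0 := by
  obtain ⟨N, c, rfl⟩ := hp
  have hconj : Integrable (fun t => conj (h t)) m :=
    (Complex.conjCLE.integrable_comp_iff (φ := h)).mpr hh
  have hint : ∀ j ∈ Finset.range N,
      Integrable (fun t => c j * (conj (h t) * fourier (j : ℤ) t)) m := fun j _ =>
    ((hconj.fourier_smul (j : ℤ)).const_mul (c j)).congr (ae_of_all _ fun t => by
      simp only [smul_eq_mul]; ring)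
  simp_rw [Finset.mul_sum, mul_left_comm (conj (h _))]
  rw [integral_finsetSum _ hint]
  refine Finset.sum_eq_zero fun j _ => ?_
  rw [integral_const_mul, integral_conj_mul_fourier, hcoeff j (Int.natCast_nonneg j), map_zero,
    mul_zero]

theorem IsOuter.ae_eq_zero_of_fourierCoeff_conj_mul {φ g : 𝕋c → ℂ} (hφ : IsOuter φ)
    (hg : InH2 g) (hφg : ∀ n : ℤ, 0 ≤ n → fourierCoeff (fun t => conj (φ t) * g t) n = 0) :
    g =ᵐ[m] 0 := by
  have hφp : ∀ p, IsAnalyticPoly p → MemLp (fun t => φ t * p t) 2 m := fun p hp =>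
    hp.memLp_top.mul' hφ.1.1
  set G := hg.1.toLp g
  set s : Set (Lp ℂ 2 m) := {H | ∃ p, ∃ hp : IsAnalyticPoly p, H = (hφp p hp).toLp _}
  have hint : Integrable (fun t => conj (φ t) * g t) m :=
    (show MemLp (star φ) 2 m from hφ.1.1.star).integrable_mul hg.1
  have horth : ∀ H ∈ s, inner ℂ G H = 0 := by
    rintro _ ⟨p, hp, rfl⟩
    rw [hg.1.inner_toLp_eq_integral, ← integral_conj_mul_eq_zero_of_isAnalyticPoly hint hφg hp]
    congr 1; funext t
    simp only [map_mul, conj_conj]; ring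
  have hclosure : G ∈ closure s := by
    refine Metric.mem_closure_iff.mpr fun ε hε => ?_
    obtain ⟨p, hp, hlt⟩ := hφ.2 g hg (ε ^ 2) (by positivity)
    refine ⟨_, ⟨p, hp, rfl⟩, ?_⟩
    rw [dist_eq_norm, ← MemLp.toLp_sub]
    refine lt_of_pow_lt_pow_left₀ 2 hε.le ?_
    rw [MemLp.norm_toLp_sq_s5]
    simpa only [Pi.sub_apply, norm_sub_rev] using hlt
  have hG : G = 0 := eq_zero_of_mem_closure_of_forall_inner_eq_zero hclosure horth
  exact (MemLp.toLp_eq_toLp_iff hg.1 MemLp.zero).mp (hG.trans (MemLp.toLp_zero _).symm)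

section MemV

variable {R φ f₁ f₂ f₂' : 𝕋c → ℂ}

theorem MemV.inH2_sub (h : MemV R φ f₁ f₂) (h' : MemV R φ f₁ f₂') :
    InH2 (fun t => f₂ t - f₂' t) := by
  obtain ⟨-, -, -, -, -, hL2, hcoeff⟩ := h
  obtain ⟨-, -, -, -, -, hL2', hcoeff'⟩ := h'
  have hsub : (fun t => f₂ t - f₂' t) = fun t => (R t * f₁ t + f₂ t) - (R t * f₁ t + f₂' t) := by
    funext t; ring
  refine ⟨hsub ▸ hL2.sub hL2', fun n hn => ?_⟩
  rw [hsub, fourierCoeff_sub (hL2.integrable one_le_two) (hL2'.integrable one_le_two),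
    hcoeff n hn, hcoeff' n hn, sub_zero]

theorem MemV.fourierCoeff_conj_mul_sub (h : MemV R φ f₁ f₂) (h' : MemV R φ f₁ f₂') (n : ℤ)
    (hn : 0 ≤ n) : fourierCoeff (fun t => conj (φ t) * (f₂ t - f₂' t)) n = 0 := by
  obtain ⟨-, -, -, hL2, hcoeff, -⟩ := h
  obtain ⟨-, -, -, hL2', hcoeff', -⟩ := h'
  simp_rw [mul_sub]
  rw [fourierCoeff_sub (hL2.integrable one_le_two) (hL2'.integrable one_le_two),
    hcoeff n hn, hcoeff' n hn, sub_zero]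

end MemV

theorem second_component_unique_general (R : 𝕋c → ℂ)
    (φ : 𝕋c → ℂ) (hφout : IsOuter φ)
    (f₁ f₂ f₂' : 𝕋c → ℂ) (h : MemV R φ f₁ f₂) (h' : MemV R φ f₁ f₂') :
    ∀ᵐ t ∂m, f₂ t = f₂' t := by
  have hdiff := hφout.ae_eq_zero_of_fourierCoeff_conj_mul (h.inH2_sub h')
    (h.fourierCoeff_conj_mul_sub h')
  filter_upwards [hdiff] with t ht
  exact sub_eq_zero.mp ht

/-- in `L²_R = V`, the first component determines the second uniquely. -/
theorem second_component_unique (R : 𝕋c → ℂ) (hRm : MemLp R ⊤ m)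
    (hR1 : ∀ᵐ t ∂m, ‖R t‖ ≤ 1)
    (hSz : Integrable (fun t => Real.log (1 - ‖R t‖)) m)
    (φ : 𝕋c → ℂ) (hφb : MemLp φ ⊤ m) (hφout : IsOuter φ)
    (hφR : ∀ᵐ t ∂m, ‖φ t‖ ^ 2 = 1 - ‖R t‖ ^ 2)
    (hφ0 : ∃ c : ℝ, 0 < c ∧ fourierCoeff φ 0 = c)
    (f₁ f₂ f₂' : 𝕋c → ℂ) (h : MemV R φ f₁ f₂) (h' : MemV R φ f₁ f₂') :
    ∀ᵐ t ∂m, f₂ t = f₂' t :=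
  second_component_unique_general R φ hφout f₁ f₂ f₂' h h'
end
end

section
/- For every f ∈ L², the pair (f, −P₋(Rf)) belongs to V — that is, φf ∈ L², conj(φ)·P₋(Rf) ∈ H²₋, and Rf − P₋(Rf) ∈ H² — and its norm satisfies ‖(f, −P₋(Rf))‖_V² = ‖f‖² − ‖P₋(Rf)‖². -/
open MeasureTheory Complex Filter ComplexConjugate
open scoped Real Topology

noncomputable section

/-! Everything is read off Fourier coefficients through Parseval's identity. The pair
`(Rf − p, p)` splits the spectrum of `Rf` into `n ≥ 0` and `n < 0`, so `Rf − p ∈ H²` is orthogonal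
to `p` and `‖Rf − p‖² = ‖Rf‖² − ‖p‖²`; adding `‖φf‖²` and using `|R|² + |φ|² = 1` leaves
`‖f‖² − ‖p‖²`. For `n ≥ 0`, the `n`-th coefficient of `conj φ · (−p)` is the inner product of
`eₙφ ∈ H²` with `−p ∈ H²₋`, hence zero. -/

section FourierL2

open AddCircle

variable {T : ℝ} [Fact (0 < T)]

theorem hasSum_conj_fourierCoeff_mul {g h : AddCircle T → ℂ} (hg : MemLp g 2 haarAddCircle)
    (hh : MemLp h 2 haarAddCircle) :
    HasSum (fun n => conj (fourierCoeff g n) * fourierCoeff h n)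
      (∫ t, conj (g t) * h t ∂haarAddCircle) := by
  have hrepr : ∀ {u : AddCircle T → ℂ} (hu : MemLp u 2 haarAddCircle) (n : ℤ),
      fourierBasis.repr (hu.toLp u) n = fourierCoeff u n := fun hu n => by
    rw [fourierBasis_repr, fourierCoeff_congr_ae hu.coeFn_toLp]
  have hcoeff : ∀ n, conj (fourierCoeff g n) * fourierCoeff h n =
      inner ℂ (hg.toLp g) (fourierBasis n) * inner ℂ (fourierBasis n) (hh.toLp h) := fun n => by
    rw [← inner_conj_symm, ← HilbertBasis.repr_apply_apply, ← HilbertBasis.repr_apply_apply,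
      hrepr hg, hrepr hh]
  have hinner : ∫ t, conj (g t) * h t ∂haarAddCircle = inner ℂ (hg.toLp g) (hh.toLp h) := by
    rw [L2.inner_def]
    refine integral_congr_ae ?_
    filter_upwards [hg.coeFn_toLp, hh.coeFn_toLp] with t hgt hht
    rw [RCLike.inner_apply', hgt, hht]
  simpa only [hcoeff, hinner] using fourierBasis.hasSum_inner_mul_inner (hg.toLp g) (hh.toLp h)

theorem integral_conj_mul_eq_zero_of_fourierCoeff {g h : AddCircle T → ℂ}
    (hg : MemLp g 2 haarAddCircle) (hh : MemLp h 2 haarAddCircle)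
    (hgh : ∀ n, fourierCoeff g n = 0 ∨ fourierCoeff h n = 0) :
    ∫ t, conj (g t) * h t ∂haarAddCircle = 0 := by
  refine (hasSum_conj_fourierCoeff_mul hg hh).unique ?_
  convert hasSum_zero with n
  rcases hgh n with hn | hn <;> simp [hn]

theorem fourierCoeff_fourier_mul (g : AddCircle T → ℂ) (n k : ℤ) :
    fourierCoeff (fun t => fourier n t * g t) k = fourierCoeff g (k - n) := by
  simp only [fourierCoeff, smul_eq_mul, ← mul_assoc, ← fourier_add, neg_sub', sub_neg_eq_add]

theorem fourierCoeff_neg (g : AddCircle T → ℂ) (n : ℤ) :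
    fourierCoeff (fun t => -g t) n = -fourierCoeff g n := by
  simp only [fourierCoeff, smul_neg, integral_neg]

theorem integral_norm_add_sq_of_integral_conj_mul_eq_zero {g h : AddCircle T → ℂ}
    (hg : MemLp g 2 haarAddCircle) (hh : MemLp h 2 haarAddCircle)
    (hgh : ∫ t, conj (g t) * h t ∂haarAddCircle = 0) :
    ∫ t, ‖g t + h t‖ ^ 2 ∂haarAddCircle =
      ∫ t, ‖g t‖ ^ 2 ∂haarAddCircle + ∫ t, ‖h t‖ ^ 2 ∂haarAddCircle := by
  have hcross : Integrable (fun t => conj (g t) * h t) haarAddCircle :=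
    hg.star.integrable_mul hh
  have hre : ∫ t, (conj (g t) * h t).re ∂haarAddCircle = 0 := by
    simpa only [hgh, RCLike.re_to_complex, Complex.zero_re] using integral_re hcross
  have hpoint : ∀ t, ‖g t + h t‖ ^ 2 = ‖g t‖ ^ 2 + ‖h t‖ ^ 2 + 2 * (conj (g t) * h t).re := by
    intro t
    rw [norm_add_sq (𝕜 := ℂ), RCLike.inner_apply, RCLike.re_to_complex, mul_comm (h t)]
    ring
  have hg2 : Integrable (fun t => ‖g t‖ ^ 2) haarAddCircle := hg.norm.integrable_sq
  have hh2 : Integrable (fun t => ‖h t‖ ^ 2) haarAddCircle := hh.norm.integrable_sq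
  have hsum : Integrable (fun t => ‖g t‖ ^ 2 + ‖h t‖ ^ 2) haarAddCircle := hg2.add hh2
  have hre2 : Integrable (fun t => 2 * (conj (g t) * h t).re) haarAddCircle :=
    hcross.re.const_mul 2
  simp_rw [hpoint]
  rw [integral_add hsum hre2, integral_add hg2 hh2, integral_const_mul, hre, mul_zero, add_zero]

end FourierL2

section Hardy

variable {g p ψ q : 𝕋c → ℂ}

theorem IsPneg.inH2neg_neg (hp : IsPneg g p) : InH2neg (fun t => -p t) :=
  ⟨hp.1.neg, fun n hn => by rw [fourierCoeff_neg, hp.2.2 n hn, neg_zero]⟩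

theorem IsPneg.inH2_add_neg (hg : MemLp g 2 m) (hp : IsPneg g p) :
    InH2 (fun t => g t + -p t) := by
  refine ⟨hg.add hp.1.neg, fun n hn => ?_⟩
  rw [show (fun t => g t + -p t) = g + fun t => -p t from rfl,
    fourierCoeff.add (f := g) (g := fun t => -p t) (hg.integrable one_le_two)
      (hp.1.neg.integrable one_le_two), Pi.add_apply, fourierCoeff_neg, hp.2.1 n hn, add_neg_cancel]

theorem IsPneg.sqNorm_add_neg (hg : MemLp g 2 m) (hp : IsPneg g p) :
    sqNorm (fun t => g t + -p t) = sqNorm g - sqNorm p := by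
  have hH2 := hp.inH2_add_neg hg
  have horth : ∫ t, conj (g t + -p t) * p t ∂m = 0 :=
    integral_conj_mul_eq_zero_of_fourierCoeff hH2.1 hp.1 fun n =>
      (lt_or_ge n 0).imp (hH2.2 n) (hp.2.2 n)
  have hpyth := integral_norm_add_sq_of_integral_conj_mul_eq_zero hH2.1 hp.1 horth
  simp only [neg_add_cancel_right] at hpyth
  simp only [sqNorm]
  linarith

theorem InH2.conj_mul_inH2neg (hψ : InH2 ψ) (hψb : MemLp ψ ⊤ m) (hq : InH2neg q) :
    InH2neg (fun t => conj (ψ t) * q t) := by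
  refine ⟨hq.1.mul' hψb.star, fun n hn => ?_⟩
  have hfψ : MemLp (fun t => fourier n t * ψ t) 2 m :=
    hψ.1.mul' (ContinuousMap.memLp (p := ⊤) m ℂ (fourier n))
  calc fourierCoeff (fun t => conj (ψ t) * q t) n
      = ∫ t, conj (fourier n t * ψ t) * q t ∂m := by
        simp only [fourierCoeff, smul_eq_mul, map_mul, ← fourier_neg, mul_assoc]
    _ = 0 := integral_conj_mul_eq_zero_of_fourierCoeff hfψ hq.1 fun k => by
        rw [fourierCoeff_fourier_mul]
        exact (lt_or_ge k 0).imp (fun hk => hψ.2 _ (by omega)) (hq.2 k)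

end Hardy

theorem VnormSq_eq_sqNorm_add_sqNorm {R φ f₁ f₂ : 𝕋c → ℂ}
    (h₁ : MemLp (fun t => R t * f₁ t + f₂ t) 2 m) (h₂ : MemLp (fun t => φ t * f₁ t) 2 m) :
    VnormSq R φ f₁ f₂ = sqNorm (fun t => R t * f₁ t + f₂ t) + sqNorm (fun t => φ t * f₁ t) :=
  integral_add h₁.norm.integrable_sq h₂.norm.integrable_sq

theorem sqNorm_mul_add_sqNorm_mul {R φ f : 𝕋c → ℂ} (hφR : ∀ᵐ t ∂m, ‖φ t‖ ^ 2 = 1 - ‖R t‖ ^ 2)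
    (hRf : MemLp (fun t => R t * f t) 2 m) (hφf : MemLp (fun t => φ t * f t) 2 m) :
    sqNorm (fun t => R t * f t) + sqNorm (fun t => φ t * f t) = sqNorm f := by
  rw [sqNorm, sqNorm, ← integral_add hRf.norm.integrable_sq hφf.norm.integrable_sq]
  refine integral_congr_ae ?_
  filter_upwards [hφR] with t ht
  simp only [norm_mul, mul_pow, ht]
  ring

theorem pair_mem_V_general (R : 𝕋c → ℂ) (hRm : MemLp R ⊤ m)
    (φ : 𝕋c → ℂ) (hφb : MemLp φ ⊤ m) (hφout : IsOuter φ)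
    (hφR : ∀ᵐ t ∂m, ‖φ t‖ ^ 2 = 1 - ‖R t‖ ^ 2)
    (f : 𝕋c → ℂ) (hf : MemLp f 2 m)
    (p : 𝕋c → ℂ) (hp : IsPneg (fun t => R t * f t) p) :
    MemV R φ f (fun t => -p t) ∧
      VnormSq R φ f (fun t => -p t) = sqNorm f - sqNorm p := by
  have hRf : MemLp (fun t => R t * f t) 2 m := hf.mul' hRm
  have hφf : MemLp (fun t => φ t * f t) 2 m := hf.mul' hφb
  have hsum : InH2 (fun t => R t * f t + -p t) := hp.inH2_add_neg hRf
  have hconj : InH2neg (fun t => conj (φ t) * -p t) :=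
    hφout.1.conj_mul_inH2neg hφb hp.inH2neg_neg
  refine ⟨⟨hf.1, hp.1.neg.1, hφf, hconj.1, hconj.2, hsum.1, hsum.2⟩, ?_⟩
  rw [VnormSq_eq_sqNorm_add_sqNorm hsum.1 hφf, hp.sqNorm_add_neg hRf,
    ← sqNorm_mul_add_sqNorm_mul hφR hRf hφf]
  ring

/-- for every `f ∈ L²`, the pair `(f, −P₋(Rf))` belongs to `V`, and
`‖(f, −P₋(Rf))‖_V² = ‖f‖² − ‖P₋(Rf)‖²`. -/
theorem pair_mem_V (R : 𝕋c → ℂ) (hRm : MemLp R ⊤ m)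
    (hR1 : ∀ᵐ t ∂m, ‖R t‖ ≤ 1)
    (hSz : Integrable (fun t => Real.log (1 - ‖R t‖)) m)
    (φ : 𝕋c → ℂ) (hφb : MemLp φ ⊤ m) (hφout : IsOuter φ)
    (hφR : ∀ᵐ t ∂m, ‖φ t‖ ^ 2 = 1 - ‖R t‖ ^ 2)
    (hφ0 : ∃ c : ℝ, 0 < c ∧ fourierCoeff φ 0 = c)
    (f : 𝕋c → ℂ) (hf : MemLp f 2 m)
    (p : 𝕋c → ℂ) (hp : IsPneg (fun t => R t * f t) p) :
    MemV R φ f (fun t => -p t) ∧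
      VnormSq R φ f (fun t => -p t) = sqNorm f - sqNorm p :=
  pair_mem_V_general R hRm φ hφb hφout hφR f hf p hp
end
end
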